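/- arXiv:1501.05531 — 2 statements merged into one kernel-verified Lean document; each statement's English description precedes it below -/
import Mathlib

section
/- If X is an (𝔽,𝔾)-DSMC with c-transition field P, then for 0 = t_0 ≤ t_1 ≤ … ≤ t_n ≤ T and x_1,…,x_n ∈ S: ℙ(X_{t_1} = x_1, …, X_{t_n} = x_n | ℱ_T) = ∑_{x_0∈S} ℙ(X_0 = x_0 | ℱ_T) ∏_{k=0}^{n-1} p_{x_k x_{k+1}}(t_k, t_{k+1}) almost surely. -/
open MeasureTheory ProbabilityTheory

variable {Ω : Type*}

/-- The real-valued indicator of the event `{X t = y}`. -/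
def ind {d : ℕ} (X : ℝ → Ω → Fin d) (t : ℝ) (y : Fin d) : Ω → ℝ :=
  fun ω => if X t ω = y then 1 else 0

/-- `X` is an `(𝔽,𝔾)`-doubly stochastic Markov chain on `[0,T]`:
`ℙ(X_t = y | ℱ_T ∨ 𝒢_s) = ℙ(X_t = y | ℱ_t ∨ σ(X_s))` for `0 ≤ s ≤ t ≤ T`. -/
def IsDSMC {m0 : MeasurableSpace Ω} (μ : Measure Ω) (ℱ 𝒢 : Filtration ℝ m0) (T : ℝ)
    {d : ℕ} (X : ℝ → Ω → Fin d) : Prop :=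
  ∀ s t : ℝ, 0 ≤ s → s ≤ t → t ≤ T → ∀ y : Fin d,
    μ[ind X t y | (ℱ T : MeasurableSpace Ω) ⊔ 𝒢 s]
      =ᵐ[μ] μ[ind X t y | (ℱ t : MeasurableSpace Ω) ⊔ MeasurableSpace.comap (X s) ⊤]

/-- The conditional transition probability field `p_{xy}(s,t)` of `X`:
`ℙ(X_t = y, X_s = x | ℱ_t)/ℙ(X_s = x | ℱ_t)` on `{ℙ(X_s = x | ℱ_t) > 0}` and
`1_{x = y}` otherwise. -/
noncomputable def ctf {m0 : MeasurableSpace Ω} (μ : Measure Ω) (ℱ : Filtration ℝ m0)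
    {d : ℕ} (X : ℝ → Ω → Fin d) (s t : ℝ) (x y : Fin d) (ω : Ω) : ℝ :=
  if 0 < condExp (ℱ t) μ (ind X s x) ω then
    condExp (ℱ t) μ (fun ω' => ind X t y ω' * ind X s x ω') ω / condExp (ℱ t) μ (ind X s x) ω
  else if x = y then 1 else 0

/-!
One Markov step: if `F` is an integrable `𝒢_s`-measurable functional of the path up to time `s`
that vanishes off `{X_s = x}`, then conditioning `F · 1{X_t = y}` first on `ℱ_T ∨ 𝒢_s`, using
the DSMC property to pass to `ℱ_t ∨ σ(X_s)`, and pulling out the `ℱ_t`-measurable factor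
`p_{xy}(s,t)` gives `𝔼[F · 1{X_t = y} | ℱ_T] = p_{xy}(s,t) 𝔼[F | ℱ_T]`. Iterating this along the
grid and summing over the initial state gives the formula. The conditional expectation given
`ℱ_t ∨ σ(X_s)` is identified through the fibres of `X_s`: on `{X_s = x}` every
`ℱ_t ∨ σ(X_s)`-measurable set coincides with an `ℱ_t`-measurable one.
-/

open Finset

section Indicator

variable {d : ℕ} {X : ℝ → Ω → Fin d}

lemma ind_nonneg (t : ℝ) (y : Fin d) (ω : Ω) : 0 ≤ ind X t y ω := by
  unfold ind; positivity

lemma ind_le_one (t : ℝ) (y : Fin d) (ω : Ω) : ind X t y ω ≤ 1 := by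
  unfold ind; split <;> norm_num

lemma norm_ind_le_one (t : ℝ) (y : Fin d) (ω : Ω) : ‖ind X t y ω‖ ≤ 1 := by
  rw [Real.norm_of_nonneg (ind_nonneg t y ω)]
  exact ind_le_one t y ω

lemma sum_ind (t : ℝ) (ω : Ω) : ∑ y : Fin d, ind X t y ω = 1 := by
  simp [ind]

lemma ind_mul_eq_indicator (s : ℝ) (x : Fin d) (g : Ω → ℝ) :
    (fun ω => g ω * ind X s x ω) = (X s ⁻¹' {x}).indicator g := by
  ext ω
  by_cases h : X s ω = x <;> simp [ind, h]

lemma measurable_ind {m : MeasurableSpace Ω} {t : ℝ} (h : Measurable[m] (X t)) (y : Fin d) :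
    Measurable[m] (ind X t y) :=
  Measurable.ite (h (measurableSet_singleton y)) measurable_const measurable_const

variable {m0 : MeasurableSpace Ω} {μ : Measure Ω}

lemma integrable_ind [IsFiniteMeasure μ] {t : ℝ} (h : Measurable (X t)) (y : Fin d) :
    Integrable (ind X t y) μ :=
  (integrable_const 1).mono' (measurable_ind h y).aestronglyMeasurable
    (ae_of_all _ (norm_ind_le_one t y))

lemma integrable_ind_mul_ind [IsFiniteMeasure μ] {s t : ℝ} (hs : Measurable (X s))
    (ht : Measurable (X t)) (x y : Fin d) :
    Integrable (fun ω => ind X t y ω * ind X s x ω) μ :=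
  (integrable_ind hs x).bdd_mul (measurable_ind ht y).aestronglyMeasurable
    (ae_of_all _ (norm_ind_le_one t y))

lemma integrable_prod_ind [IsFiniteMeasure μ] {ι : Type*} (hX : ∀ r, Measurable (X r))
    (s : Finset ι) (t : ι → ℝ) (u : ι → Fin d) :
    Integrable (fun ω => ∏ k ∈ s, ind X (t k) (u k) ω) μ := by
  refine (integrable_const 1).mono'
    (Finset.measurable_prod _ fun k _ => measurable_ind (hX (t k)) (u k)).aestronglyMeasurable
    (ae_of_all _ fun ω => ?_)
  rw [Real.norm_of_nonneg (prod_nonneg fun k _ => ind_nonneg _ _ _)]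
  exact prod_le_one (fun k _ => ind_nonneg _ _ _) fun k _ => ind_le_one _ _ _

lemma setIntegral_mul_ind_of_inter_eq {s : ℝ} (hs : Measurable (X s)) {x : Fin d}
    {S A : Set Ω} (hSA : S ∩ X s ⁻¹' {x} = A ∩ X s ⁻¹' {x}) (g : Ω → ℝ) :
    ∫ ω in S, g ω * ind X s x ω ∂μ = ∫ ω in A, g ω * ind X s x ω ∂μ := by
  have hx : MeasurableSet (X s ⁻¹' {x}) := hs (measurableSet_singleton x)
  rw [ind_mul_eq_indicator, setIntegral_indicator hx, setIntegral_indicator hx, hSA]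

lemma prod_Icc_ind_eq_sum_prod_range_update (t : ℕ → ℝ) (x : ℕ → Fin d) (n : ℕ) :
    (fun ω => ∏ k ∈ Icc 1 n, ind X (t k) (x k) ω)
      = ∑ x0 : Fin d, fun ω => ∏ k ∈ range (n + 1), ind X (t k) (Function.update x 0 x0 k) ω := by
  ext ω
  rw [Finset.sum_apply]
  simp_rw [prod_range_succ', Function.update_self,
    Function.update_of_ne (Nat.succ_ne_zero _), ← mul_sum, sum_ind, mul_one,
    ← Finset.Ico_add_one_right_eq_Icc, prod_Ico_eq_prod_range, add_tsub_cancel_right, add_comm 1]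

end Indicator

section Fibres

variable {δ : Type*}

lemma exists_inter_preimage_eq_of_measurableSet_sup_comap {m : MeasurableSpace Ω} {f : Ω → δ}
    {S : Set Ω} (hS : MeasurableSet[m ⊔ MeasurableSpace.comap f ⊤] S) (x : δ) :
    ∃ A, MeasurableSet[m] A ∧ S ∩ f ⁻¹' {x} = A ∩ f ⁻¹' {x} := by
  replace hS := MeasurableSpace.measurableSet_sup.1 hS
  induction hS with
  | basic S hS =>
    obtain hS | ⟨B, -, rfl⟩ : MeasurableSet[m] S ∨ MeasurableSet[MeasurableSpace.comap f ⊤] S := hS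
    · exact ⟨S, hS, rfl⟩
    · refine ⟨{_ω | x ∈ B}, MeasurableSet.const _, ?_⟩
      ext ω
      constructor <;> rintro ⟨h, rfl : f ω = x⟩ <;> exact ⟨h, rfl⟩
  | empty => exact ⟨∅, .empty, rfl⟩
  | compl S _ ih =>
    obtain ⟨A, hA, hSA⟩ := ih
    refine ⟨Aᶜ, hA.compl, ?_⟩
    rw [← Set.sdiff_eq_compl_inter, ← Set.sdiff_inter_self_eq_sdiff, hSA,
      Set.sdiff_inter_self_eq_sdiff, Set.sdiff_eq_compl_inter]
  | iUnion S _ ih =>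
    choose A hA hSA using ih
    exact ⟨⋃ i, A i, .iUnion hA, by simp_rw [Set.iUnion_inter, hSA]⟩

end Fibres

section TransitionField

variable {m0 : MeasurableSpace Ω} {μ : Measure Ω} {ℱ : Filtration ℝ m0} {d : ℕ}
  {X : ℝ → Ω → Fin d}

lemma stronglyMeasurable_ctf (s t : ℝ) (x y : Fin d) :
    StronglyMeasurable[ℱ t] (ctf μ ℱ X s t x y) := by
  refine Measurable.stronglyMeasurable (Measurable.ite ?_ ?_ measurable_const)
  · exact measurableSet_lt measurable_const stronglyMeasurable_condExp.measurable
  · exact stronglyMeasurable_condExp.measurable.div stronglyMeasurable_condExp.measurable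

lemma condExp_ind_mul_ind_nonneg_and_le [IsFiniteMeasure μ] {m : MeasurableSpace Ω} {s t : ℝ}
    (hs : Measurable[m0] (X s)) (ht : Measurable[m0] (X t)) (x y : Fin d) :
    ∀ᵐ ω ∂μ, 0 ≤ μ[fun ω' => ind X t y ω' * ind X s x ω' | m] ω ∧
      μ[fun ω' => ind X t y ω' * ind X s x ω' | m] ω ≤ μ[ind X s x | m] ω := by
  filter_upwards [condExp_nonneg (m := m) (ae_of_all μ fun ω =>
      mul_nonneg (ind_nonneg t y ω) (ind_nonneg s x ω)),
    condExp_mono (m := m) (integrable_ind_mul_ind hs ht x y) (integrable_ind hs x)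
      (ae_of_all μ fun ω => mul_le_of_le_one_left (ind_nonneg s x ω) (ind_le_one t y ω))]
    with ω h0 h1
  exact ⟨h0, h1⟩

lemma norm_ctf_le_one [IsFiniteMeasure μ] {s t : ℝ} (hs : Measurable (X s))
    (ht : Measurable (X t)) (x y : Fin d) : ∀ᵐ ω ∂μ, ‖ctf μ ℱ X s t x y ω‖ ≤ 1 := by
  filter_upwards [condExp_ind_mul_ind_nonneg_and_le (μ := μ) (m := ℱ t) hs ht x y] with ω ⟨h0, h1⟩
  unfold ctf
  split_ifs with hpos
  · rw [Real.norm_of_nonneg (div_nonneg h0 hpos.le)]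
    exact div_le_one_of_le₀ h1 hpos.le
  all_goals norm_num

lemma integrable_ctf_mul_ind [IsFiniteMeasure μ] {s t : ℝ} (hs : Measurable (X s))
    (ht : Measurable (X t)) (x y : Fin d) :
    Integrable (fun ω => ctf μ ℱ X s t x y ω * ind X s x ω) μ :=
  (integrable_ind hs x).bdd_mul
    ((stronglyMeasurable_ctf s t x y).mono (ℱ.le t)).aestronglyMeasurable
    (norm_ctf_le_one hs ht x y)

/-- On `{ℙ(X_s = x | ℱ_t) = 0}` both sides vanish, whatever value `ctf` takes there. -/
lemma ctf_mul_condExp_ind [IsFiniteMeasure μ] {s t : ℝ} (hs : Measurable (X s))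
    (ht : Measurable (X t)) (x y : Fin d) :
    ctf μ ℱ X s t x y * μ[ind X s x | ℱ t]
      =ᵐ[μ] μ[fun ω => ind X t y ω * ind X s x ω | ℱ t] := by
  filter_upwards [condExp_ind_mul_ind_nonneg_and_le (μ := μ) (m := ℱ t) hs ht x y] with ω ⟨h0, h1⟩
  rw [Pi.mul_apply, ctf]
  by_cases hpos : 0 < μ[ind X s x | ℱ t] ω
  · rw [if_pos hpos]
    field_simp
  · have hzero : μ[ind X s x | ℱ t] ω = 0 := le_antisymm (not_lt.1 hpos) (h0.trans h1)
    rw [hzero, mul_zero, le_antisymm (h1.trans_eq hzero) h0]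

lemma setIntegral_ctf_mul_ind [IsFiniteMeasure μ] {s t : ℝ} (hs : Measurable (X s))
    (ht : Measurable (X t)) (x y : Fin d) {A : Set Ω} (hA : MeasurableSet[ℱ t] A) :
    ∫ ω in A, ctf μ ℱ X s t x y ω * ind X s x ω ∂μ
      = ∫ ω in A, ind X t y ω * ind X s x ω ∂μ := by
  have hpull : μ[ctf μ ℱ X s t x y * ind X s x | ℱ t]
      =ᵐ[μ] ctf μ ℱ X s t x y * μ[ind X s x | ℱ t] :=
    condExp_stronglyMeasurable_mul_of_bound (ℱ.le t) (stronglyMeasurable_ctf s t x y)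
      (integrable_ind hs x) 1 (norm_ctf_le_one hs ht x y)
  calc ∫ ω in A, ctf μ ℱ X s t x y ω * ind X s x ω ∂μ
      = ∫ ω in A, μ[ctf μ ℱ X s t x y * ind X s x | ℱ t] ω ∂μ :=
        (setIntegral_condExp (ℱ.le t) (integrable_ctf_mul_ind hs ht x y) hA).symm
    _ = ∫ ω in A, μ[fun ω => ind X t y ω * ind X s x ω | ℱ t] ω ∂μ :=
        integral_congr_ae (ae_restrict_of_ae (hpull.trans (ctf_mul_condExp_ind hs ht x y)))
    _ = ∫ ω in A, ind X t y ω * ind X s x ω ∂μ :=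
        setIntegral_condExp (ℱ.le t) (integrable_ind_mul_ind hs ht x y) hA

theorem condExp_ind_sup_comap_ae_eq [IsFiniteMeasure μ] {s t : ℝ} (hs : Measurable (X s))
    (ht : Measurable (X t)) (y : Fin d) :
    μ[ind X t y | (ℱ t : MeasurableSpace Ω) ⊔ MeasurableSpace.comap (X s) ⊤]
      =ᵐ[μ] fun ω => ∑ x : Fin d, ctf μ ℱ X s t x y ω * ind X s x ω := by
  have hm : (ℱ t : MeasurableSpace Ω) ⊔ MeasurableSpace.comap (X s) ⊤ ≤ m0 :=
    sup_le (ℱ.le t) hs.comap_le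
  refine (ae_eq_condExp_of_forall_setIntegral_eq hm (integrable_ind ht y)
    (fun S _ _ => (integrable_finsetSum _ fun x _ => integrable_ctf_mul_ind hs ht x y).integrableOn)
    (fun S hS _ => ?_) ?_).symm
  · have hfibre : ∀ x, ∫ ω in S, ctf μ ℱ X s t x y ω * ind X s x ω ∂μ
        = ∫ ω in S, ind X t y ω * ind X s x ω ∂μ := fun x => by
      obtain ⟨A, hA, hSA⟩ := exists_inter_preimage_eq_of_measurableSet_sup_comap hS x
      rw [setIntegral_mul_ind_of_inter_eq hs hSA, setIntegral_mul_ind_of_inter_eq hs hSA,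
        setIntegral_ctf_mul_ind hs ht x y hA]
    rw [integral_finsetSum _ fun x _ => (integrable_ctf_mul_ind hs ht x y).integrableOn]
    simp_rw [hfibre, ← integral_finsetSum _ fun x _ =>
      (integrable_ind_mul_ind hs ht x y).integrableOn, ← mul_sum, sum_ind, mul_one]
  · refine (Finset.measurable_sum _ fun x _ => Measurable.mul ?_ ?_).aestronglyMeasurable
    · exact (stronglyMeasurable_ctf s t x y).measurable.mono le_sup_left le_rfl
    · exact (measurable_ind (comap_measurable (X s)) x).mono le_sup_right le_rfl

end TransitionField

section Chain

variable {m0 : MeasurableSpace Ω} {μ : Measure Ω} [IsFiniteMeasure μ] {ℱ 𝒢 : Filtration ℝ m0}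
  {T : ℝ} {d : ℕ} {X : ℝ → Ω → Fin d}

theorem IsDSMC.condExp_mul_ind_ae_eq (hX : IsDSMC μ ℱ 𝒢 T X)
    (hadp : ∀ r, Measurable[𝒢 r] (X r)) {s t : ℝ} (hs : 0 ≤ s) (hst : s ≤ t) (htT : t ≤ T)
    {x y : Fin d} {F : Ω → ℝ} (hFm : StronglyMeasurable[𝒢 s] F) (hFi : Integrable F μ)
    (hFx : ∀ ω, X s ω ≠ x → F ω = 0) :
    μ[F * ind X t y | ℱ T] =ᵐ[μ] ctf μ ℱ X s t x y * μ[F | ℱ T] := by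
  have hmeas : ∀ r, Measurable (X r) := fun r => (hadp r).mono (𝒢.le r) le_rfl
  have hm : (ℱ T : MeasurableSpace Ω) ⊔ 𝒢 s ≤ m0 := sup_le (ℱ.le T) (𝒢.le s)
  have hmarkov : F * μ[ind X t y | (ℱ T : MeasurableSpace Ω) ⊔ 𝒢 s]
      =ᵐ[μ] ctf μ ℱ X s t x y * F := by
    filter_upwards [hX s t hs hst htT y, condExp_ind_sup_comap_ae_eq (μ := μ) (ℱ := ℱ)
      (hmeas s) (hmeas t) y] with ω hdsmc hsum
    rw [Pi.mul_apply, hdsmc, hsum]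
    by_cases hω : X s ω = x
    · simp [ind, hω, mul_comm]
    · simp [hFx ω hω]
  calc μ[F * ind X t y | ℱ T]
      =ᵐ[μ] μ[μ[F * ind X t y | (ℱ T : MeasurableSpace Ω) ⊔ 𝒢 s] | ℱ T] :=
        (condExp_condExp_of_le le_sup_left hm).symm
    _ =ᵐ[μ] μ[ctf μ ℱ X s t x y * F | ℱ T] := condExp_congr_ae <|
        (condExp_mul_of_stronglyMeasurable_left (m := (ℱ T : MeasurableSpace Ω) ⊔ 𝒢 s)
          (hFm.mono le_sup_right)
          (hFi.mul_bdd (measurable_ind (hmeas t) y).aestronglyMeasurable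
            (ae_of_all _ (norm_ind_le_one t y)))
          (integrable_ind (hmeas t) y)).trans hmarkov
    _ =ᵐ[μ] ctf μ ℱ X s t x y * μ[F | ℱ T] :=
        condExp_stronglyMeasurable_mul_of_bound (ℱ.le T)
          ((stronglyMeasurable_ctf s t x y).mono (ℱ.mono htT)) hFi 1
          (norm_ctf_le_one (hmeas s) (hmeas t) x y)

theorem IsDSMC.condExp_prod_ind_ae_eq (hX : IsDSMC μ ℱ 𝒢 T X)
    (hadp : ∀ r, Measurable[𝒢 r] (X r)) {t : ℕ → ℝ} (ht0 : 0 ≤ t 0) (u : ℕ → Fin d) {n : ℕ}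
    (hmono : MonotoneOn t (Set.Iic n)) (htn : t n ≤ T) :
    μ[fun ω => ∏ k ∈ range (n + 1), ind X (t k) (u k) ω | ℱ T]
      =ᵐ[μ] fun ω => μ[ind X (t 0) (u 0) | ℱ T] ω *
        ∏ k ∈ range n, ctf μ ℱ X (t k) (t (k + 1)) (u k) (u (k + 1)) ω := by
  induction n with
  | zero => simp only [zero_add, prod_range_one, prod_range_zero, mul_one]; rfl
  | succ n ih =>
    have hmono' : MonotoneOn t (Set.Iic n) := hmono.mono (Set.Iic_subset_Iic.2 n.le_succ)
    have hle : ∀ k ≤ n, t k ≤ t n := fun k hk => hmono' hk (le_refl n) hk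
    have hstep : t n ≤ t (n + 1) := hmono n.le_succ (le_refl (n + 1)) n.le_succ
    set F : Ω → ℝ := fun ω => ∏ k ∈ range (n + 1), ind X (t k) (u k) ω
    have hFm : StronglyMeasurable[𝒢 (t n)] F :=
      (Finset.measurable_prod _ fun k hk => measurable_ind
        ((hadp (t k)).mono (𝒢.mono (hle k (mem_range_succ_iff.1 hk))) le_rfl) _).stronglyMeasurable
    have hFx : ∀ ω, X (t n) ω ≠ u n → F ω = 0 := fun ω hω =>
      prod_eq_zero (self_mem_range_succ n) (by simp [ind, hω])
    have hsplit : (fun ω => ∏ k ∈ range (n + 1 + 1), ind X (t k) (u k) ω)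
        = F * ind X (t (n + 1)) (u (n + 1)) := funext fun ω => prod_range_succ _ _
    rw [hsplit]
    filter_upwards [hX.condExp_mul_ind_ae_eq hadp (ht0.trans (hle 0 n.zero_le)) hstep htn hFm
      (integrable_prod_ind (fun r => (hadp r).mono (𝒢.le r) le_rfl) _ _ _) hFx,
      ih hmono' (hstep.trans htn)] with ω hmarkov hchain
    rw [hmarkov, Pi.mul_apply, hchain, prod_range_succ]
    ring

end Chain

theorem dsmc_finite_dimensional_distributions_general
    {m0 : MeasurableSpace Ω} (μ : Measure Ω) [IsProbabilityMeasure μ]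
    (ℱ 𝒢 : Filtration ℝ m0) (T : ℝ) (d : ℕ) (X : ℝ → Ω → Fin d)
    (hadp : ∀ t : ℝ, Measurable[𝒢 t] (X t))
    (hX : IsDSMC μ ℱ 𝒢 T X)
    (n : ℕ) (t : ℕ → ℝ) (x : ℕ → Fin d)
    (ht0 : t 0 = 0) (hmono : ∀ k < n, t k ≤ t (k + 1)) (htn : t n ≤ T) :
    μ[(fun ω => ∏ k ∈ Finset.Icc 1 n, ind X (t k) (x k) ω) | ℱ T]
      =ᵐ[μ] fun ω => ∑ x0 : Fin d,
        condExp (ℱ T) μ (ind X 0 x0) ω *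
          ∏ k ∈ Finset.range n,
            ctf μ ℱ X (t k) (t (k + 1))
              (Function.update x 0 x0 k) (Function.update x 0 x0 (k + 1)) ω := by
  have hmonoOn : MonotoneOn t (Set.Iic n) :=
    monotoneOn_of_le_succ Set.ordConnected_Iic fun k _ _ hk => hmono k (Order.succ_le_iff.1 hk)
  rw [prod_Icc_ind_eq_sum_prod_range_update]
  refine (condExp_finsetSum (fun x0 _ =>
    integrable_prod_ind (fun r => (hadp r).mono (𝒢.le r) le_rfl) _ _ _) _).trans ?_
  filter_upwards [ae_all_iff.2 fun x0 => hX.condExp_prod_ind_ae_eq hadp ht0.ge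
    (Function.update x 0 x0) hmonoOn htn] with ω hchain
  simp only [Finset.sum_apply, hchain, Function.update_self, ht0]

/-- Conditional finite-dimensional distributions of a DSMC: for a grid
`0 = t_0 ≤ t_1 ≤ … ≤ t_n ≤ T` and states `x_1, …, x_n`,
`ℙ(X_{t_1} = x_1, …, X_{t_n} = x_n | ℱ_T)
  = ∑_{x_0} ℙ(X_0 = x_0 | ℱ_T) ∏_{k=0}^{n-1} p_{x_k x_{k+1}}(t_k, t_{k+1})` a.s. -/
theorem dsmc_finite_dimensional_distributions
    {m0 : MeasurableSpace Ω} (μ : Measure Ω) [IsProbabilityMeasure μ]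
    (ℱ 𝒢 : Filtration ℝ m0) (T : ℝ) (hT : 0 < T) (d : ℕ) (X : ℝ → Ω → Fin d)
    (hadp : ∀ t : ℝ, Measurable[𝒢 t] (X t))
    (hX : IsDSMC μ ℱ 𝒢 T X)
    (n : ℕ) (t : ℕ → ℝ) (x : ℕ → Fin d)
    (ht0 : t 0 = 0) (hmono : ∀ k < n, t k ≤ t (k + 1)) (htn : t n ≤ T) :
    μ[(fun ω => ∏ k ∈ Finset.Icc 1 n, ind X (t k) (x k) ω) | ℱ T]
      =ᵐ[μ] fun ω => ∑ x0 : Fin d,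
        condExp (ℱ T) μ (ind X 0 x0) ω *
          ∏ k ∈ Finset.range n,
            ctf μ ℱ X (t k) (t (k + 1))
              (Function.update x 0 x0 k) (Function.update x 0 x0 (k + 1)) ω :=
  dsmc_finite_dimensional_distributions_general μ ℱ 𝒢 T d X hadp hX n t x ht0 hmono htn
end

section
/- Let X be an (𝔽,𝔾)-DSMC whose initial state satisfies ℙ(X_0 = x | ℱ_T) = ℙ(X_0 = x | ℱ_0) for all x ∈ S. Then for all 0 ≤ t_1 ≤ … ≤ t_n ≤ t ≤ T and x_1,…,x_n ∈ S: ℙ(X_{t_1}=x_1,…,X_{t_n}=x_n | ℱ_T) = ℙ(X_{t_1}=x_1,…,X_{t_n}=x_n | ℱ_t). Consequently, 𝔽 is ℙ-immersed in 𝔽 ∨ 𝔽^X. -/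
/-!
Fix `0 ≤ r' ≤ r ≤ s ≤ T`. By the DSMC property, `ℙ(X_r ∈ u | ℱ_T ∨ 𝒢_{r'}) = p_{X_{r'}}`, where
`p_x = ℙ(X_r ∈ u, X_{r'} = x | ℱ_r) / ℙ(X_{r'} = x | ℱ_r)` is `ℱ_r`-measurable. Conditioning
further, for every `𝒢_{r'}`-measurable event `E` and every `ℱ_r ≤ 𝒦 ≤ ℱ_T`,
`ℙ(E ∩ {X_r ∈ u} | 𝒦) = ∑ₓ p_x ℙ(E ∩ {X_{r'} = x} | 𝒦)`.
For a cylinder event `E` of the path at times `≤ r'`, induction on the number of times (starting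
from the hypothesis on `X_0`) shows that the right-hand side is the same for `𝒦 = ℱ_T` and
`𝒦 = ℱ_s`. So cylinder events of the path up to `t` are conditionally independent of `ℱ_T` given
`ℱ_t`; as they form a π-system, a π-λ argument gives `𝔼[ψ | ℱ_t ∨ ℱ^X_t] = 𝔼[ψ | ℱ_t]` for
integrable `ℱ_T`-measurable `ψ`.
-/

open MeasureTheory ProbabilityTheory

variable {Ω : Type*}

open MeasurableSpace Set

section PiSystem

variable {α : Type*}

theorem IsPiSystem.image2_inter {S T : Set (Set α)} (hS : IsPiSystem S) (hT : IsPiSystem T) :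
    IsPiSystem (image2 (· ∩ ·) S T) := by
  rintro _ ⟨B, hB, C, hC, rfl⟩ _ ⟨B', hB', C', hC', rfl⟩ hne
  rw [inter_inter_inter_comm] at hne ⊢
  exact ⟨_, hS B hB B' hB' hne.left, _, hT C hC C' hC' hne.right, rfl⟩

theorem MeasurableSpace.generateFrom_image2_inter {S T : Set (Set α)} (hS : univ ∈ S)
    (hT : univ ∈ T) : generateFrom (image2 (· ∩ ·) S T) = generateFrom S ⊔ generateFrom T := by
  refine le_antisymm (generateFrom_le ?_) (sup_le ?_ ?_)
  · rintro _ ⟨B, hB, C, hC, rfl⟩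
    exact (le_sup_left (b := generateFrom T) _ (measurableSet_generateFrom hB)).inter
      (le_sup_right (a := generateFrom S) _ (measurableSet_generateFrom hC))
  · exact generateFrom_mono fun B hB => ⟨B, hB, univ, hT, inter_univ B⟩
  · exact generateFrom_mono fun C hC => ⟨univ, hS, C, hC, univ_inter C⟩

theorem MeasurableSpace.sup_eq_generateFrom_image2_inter (m₁ m₂ : MeasurableSpace α) :
    m₁ ⊔ m₂ =
      generateFrom (image2 (· ∩ ·) {s | MeasurableSet[m₁] s} {s | MeasurableSet[m₂] s}) := by
  rw [generateFrom_image2_inter (S := {s | MeasurableSet[m₁] s}) (T := {s | MeasurableSet[m₂] s})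
    (@MeasurableSet.univ _ m₁) (@MeasurableSet.univ _ m₂),
    @generateFrom_measurableSet _ m₁, @generateFrom_measurableSet _ m₂]

end PiSystem

namespace MeasureTheory

variable {m m' m₁ m₂ m0 : MeasurableSpace Ω} {μ : Measure Ω} {S : Type*}

theorem ae_eq_condExp_of_forall_setIntegral_eq_of_isPiSystem [IsFiniteMeasure μ]
    (hm : m ≤ m0) {P : Set (Set Ω)} (hgen : m = generateFrom P) (hP : IsPiSystem P)
    (huniv : univ ∈ P) {f g : Ω → ℝ} (hf : Integrable f μ) (hg : Integrable g μ)
    (hgm : StronglyMeasurable[m] g) (hfg : ∀ s ∈ P, ∫ ω in s, g ω ∂μ = ∫ ω in s, f ω ∂μ) :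
    g =ᵐ[μ] μ[f | m] := by
  suffices h : ∀ s, MeasurableSet[m] s → ∫ ω in s, g ω ∂μ = ∫ ω in s, f ω ∂μ from
    ae_eq_condExp_of_forall_setIntegral_eq hm hf (fun _ _ _ => hg.integrableOn)
      (fun s hs _ => h s hs) hgm.aestronglyMeasurable
  intro s hs
  induction s, hs using induction_on_inter hgen hP with
  | empty => simp
  | basic s hs => exact hfg s hs
  | compl s hs ih =>
    have hg' := integral_add_compl (hm s hs) hg
    have hf' := integral_add_compl (hm s hs) hf
    have huniv' := hfg univ huniv
    rw [setIntegral_univ, setIntegral_univ] at huniv'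
    linarith
  | iUnion s hdisj hs ih =>
    rw [integral_iUnion (fun i => hm _ (hs i)) hdisj hg.integrableOn,
      integral_iUnion (fun i => hm _ (hs i)) hdisj hf.integrableOn]
    exact tsum_congr ih

theorem setIntegral_mul_condExp [IsFiniteMeasure μ] (hm : m ≤ m0) {f k : Ω → ℝ}
    (hk : StronglyMeasurable[m] k) (hkf : Integrable (fun ω => k ω * f ω) μ)
    (hf : Integrable f μ) {B : Set Ω} (hB : MeasurableSet[m] B) :
    ∫ ω in B, k ω * μ[f | m] ω ∂μ = ∫ ω in B, k ω * f ω ∂μ := by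
  rw [← setIntegral_condExp hm hkf hB]
  exact setIntegral_congr_ae (hm B hB)
    ((condExp_mul_of_stronglyMeasurable_left hk hkf hf).mono fun _ h _ => h.symm)

theorem setIntegral_inter_eq_setIntegral_mul_indicator {B C : Set Ω} (hC : MeasurableSet C)
    (φ : Ω → ℝ) :
    ∫ ω in B ∩ C, φ ω ∂μ = ∫ ω in B, φ ω * C.indicator (fun _ => (1 : ℝ)) ω ∂μ := by
  rw [← setIntegral_indicator hC]
  congr 1 with ω
  by_cases hω : ω ∈ C <;> simp [hω]

theorem Integrable.mul_indicator_one [IsFiniteMeasure μ] {ψ : Ω → ℝ} (hψ : Integrable ψ μ)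
    {C : Set Ω} (hC : MeasurableSet C) :
    Integrable (fun ω => ψ ω * C.indicator (fun _ => (1 : ℝ)) ω) μ :=
  hψ.mul_bdd (c := 1) ((integrable_const 1).indicator hC).aestronglyMeasurable
    (ae_of_all _ fun ω => by by_cases hω : ω ∈ C <;> simp [hω])

theorem ae_abs_condExp_indicator_le_one (C : Set Ω) : ∀ᵐ ω ∂μ, |(μ⟦C | m⟧) ω| ≤ 1 :=
  ae_bdd_abs_condExp_of_ae_bdd_abs <| ae_of_all _ fun ω => by
    by_cases hω : ω ∈ C <;> simp [hω]

theorem Integrable.mul_condExp_indicator {ψ : Ω → ℝ} (hψ : Integrable ψ μ) (C : Set Ω) :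
    Integrable (fun ω => ψ ω * (μ⟦C | m⟧) ω) μ :=
  hψ.mul_bdd integrable_condExp.aestronglyMeasurable
    ((ae_abs_condExp_indicator_le_one C).mono fun _ h => by rwa [Real.norm_eq_abs])

theorem condExp_mul_indicator_ae_eq_of_condExp_indicator_ae_eq [IsFiniteMeasure μ]
    (hm : m ≤ m') (hm' : m' ≤ m0) {C : Set Ω} (hC : MeasurableSet C)
    (hCeq : μ⟦C | m'⟧ =ᵐ[μ] μ⟦C | m⟧) {ψ : Ω → ℝ} (hψm : StronglyMeasurable[m'] ψ)
    (hψ : Integrable ψ μ) :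
    μ[fun ω => ψ ω * C.indicator (fun _ => (1 : ℝ)) ω | m]
      =ᵐ[μ] fun ω => μ[ψ | m] ω * (μ⟦C | m⟧) ω :=
  calc μ[fun ω => ψ ω * C.indicator (fun _ => (1 : ℝ)) ω | m]
      =ᵐ[μ] μ[μ[fun ω => ψ ω * C.indicator (fun _ => (1 : ℝ)) ω | m'] | m] :=
        (condExp_condExp_of_le hm hm').symm
    _ =ᵐ[μ] μ[fun ω => ψ ω * (μ⟦C | m'⟧) ω | m] :=
        condExp_congr_ae <| condExp_mul_of_stronglyMeasurable_left hψm
          (hψ.mul_indicator_one hC) ((integrable_const 1).indicator hC)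
    _ =ᵐ[μ] μ[fun ω => ψ ω * (μ⟦C | m⟧) ω | m] :=
        condExp_congr_ae <| hCeq.mono fun ω h => congrArg (ψ ω * ·) h
    _ =ᵐ[μ] fun ω => μ[ψ | m] ω * (μ⟦C | m⟧) ω :=
        condExp_mul_of_stronglyMeasurable_right stronglyMeasurable_condExp
          (hψ.mul_condExp_indicator C) hψ

theorem condExp_sup_generateFrom_ae_eq_of_condExp_indicator_ae_eq [IsFiniteMeasure μ]
    (hm : m ≤ m') (hm' : m' ≤ m0) {P : Set (Set Ω)} (hP : IsPiSystem P) (hPuniv : univ ∈ P)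
    (hPm : ∀ C ∈ P, MeasurableSet C) (hPeq : ∀ C ∈ P, μ⟦C | m'⟧ =ᵐ[μ] μ⟦C | m⟧)
    {ψ : Ω → ℝ} (hψm : StronglyMeasurable[m'] ψ) (hψ : Integrable ψ μ) :
    μ[ψ | m ⊔ generateFrom P] =ᵐ[μ] μ[ψ | m] := by
  have hgen : m ⊔ generateFrom P = generateFrom (image2 (· ∩ ·) {B | MeasurableSet[m] B} P) := by
    rw [generateFrom_image2_inter (S := {B | MeasurableSet[m] B}) (@MeasurableSet.univ _ m) hPuniv,
      @generateFrom_measurableSet _ m]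
  refine (ae_eq_condExp_of_forall_setIntegral_eq_of_isPiSystem
    (sup_le (hm.trans hm') (generateFrom_le hPm)) hgen
    (m.isPiSystem_measurableSet.image2_inter hP) ⟨univ, .univ, univ, hPuniv, inter_univ _⟩
    hψ integrable_condExp (stronglyMeasurable_condExp.mono le_sup_left) ?_).symm
  rintro _ ⟨B, hB, C, hC, rfl⟩
  have hC0 := hPm C hC
  calc ∫ ω in B ∩ C, μ[ψ | m] ω ∂μ
      = ∫ ω in B, μ[ψ | m] ω * C.indicator (fun _ => (1 : ℝ)) ω ∂μ :=
        setIntegral_inter_eq_setIntegral_mul_indicator hC0 _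
    _ = ∫ ω in B, μ[ψ | m] ω * (μ⟦C | m⟧) ω ∂μ :=
        (setIntegral_mul_condExp (hm.trans hm') stronglyMeasurable_condExp
          (integrable_condExp.mul_indicator_one hC0) ((integrable_const 1).indicator hC0) hB).symm
    _ = ∫ ω in B, μ[fun ω => ψ ω * C.indicator (fun _ => (1 : ℝ)) ω | m] ω ∂μ :=
        setIntegral_congr_ae ((hm.trans hm') B hB)
          ((condExp_mul_indicator_ae_eq_of_condExp_indicator_ae_eq hm hm' hC0 (hPeq C hC) hψm
            hψ).mono fun _ h _ => h.symm)
    _ = ∫ ω in B, ψ ω * C.indicator (fun _ => (1 : ℝ)) ω ∂μ :=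
        setIntegral_condExp (hm.trans hm') (hψ.mul_indicator_one hC0) hB
    _ = ∫ ω in B ∩ C, ψ ω ∂μ := (setIntegral_inter_eq_setIntegral_mul_indicator hC0 _).symm

theorem condExp_ae_eq_condExp_of_le_of_le [IsFiniteMeasure μ] (h₁ : m₁ ≤ m) (h₂ : m ≤ m₂)
    (hm₂ : m₂ ≤ m0) {f : Ω → ℝ} (hf : μ[f | m₂] =ᵐ[μ] μ[f | m₁]) : μ[f | m₂] =ᵐ[μ] μ[f | m] :=
  calc μ[f | m₂] =ᵐ[μ] μ[f | m₁] := hf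
    _ = μ[μ[f | m₁] | m] := (condExp_of_stronglyMeasurable (h₂.trans hm₂)
        (stronglyMeasurable_condExp.mono h₁) integrable_condExp).symm
    _ =ᵐ[μ] μ[μ[f | m₂] | m] := condExp_congr_ae hf.symm
    _ =ᵐ[μ] μ[f | m] := condExp_condExp_of_le h₂ hm₂

theorem apply_self_eq_sum_indicator_preimage [Fintype S] (Y : Ω → S) (f : S → Ω → ℝ) :
    (fun ω => f (Y ω) ω) = ∑ x, (Y ⁻¹' {x}).indicator (f x) := by
  classical
  ext ω
  simp [indicator_apply]

theorem setIntegral_inter_preimage_eq_sum {Y : Ω → S} (hY : ∀ x, MeasurableSet (Y ⁻¹' {x}))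
    {B : Set Ω} (hB : MeasurableSet B) (v : Finset S) {φ : Ω → ℝ} (hφ : Integrable φ μ) :
    ∫ ω in B ∩ Y ⁻¹' v, φ ω ∂μ = ∑ x ∈ v, ∫ ω in B ∩ Y ⁻¹' {x}, φ ω ∂μ := by
  have hsplit : B ∩ Y ⁻¹' v = ⋃ x ∈ v, B ∩ Y ⁻¹' {x} := by ext; simp
  rw [hsplit]
  refine integral_biUnion_finset v (fun x _ => hB.inter (hY x)) (fun x _ y _ hxy => ?_)
    (fun _ _ => hφ.integrableOn)
  exact ((disjoint_singleton.2 hxy).preimage Y).mono inter_subset_right inter_subset_right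

theorem ae_condExp_indicator_inter_mem_Icc [IsFiniteMeasure μ] {A B : Set Ω}
    (hA : MeasurableSet A) (hB : MeasurableSet B) :
    ∀ᵐ ω ∂μ, (μ⟦A ∩ B | m⟧) ω ∈ Icc 0 ((μ⟦B | m⟧) ω) :=
  (condExp_nonneg (ae_of_all _ (indicator_nonneg fun _ _ => zero_le_one))).and
    (condExp_mono ((integrable_const 1).indicator (hA.inter hB))
      ((integrable_const 1).indicator hB)
      (ae_of_all _ (indicator_le_indicator_of_subset inter_subset_right fun _ => zero_le_one)))

/-- For `A = {X_t ∈ u}`, `B = {X_s = x}` and `m = ℱ_t` this is, a.e. on `{ℙ(B | m) > 0}`, the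
transition field `∑_{y ∈ u} ctf μ ℱ X s t x y`; where `ℙ(B | m) = 0` it is `0`. -/
noncomputable def condProbRatio (μ : Measure Ω) (m : MeasurableSpace Ω) (A B : Set Ω) :
    Ω → ℝ :=
  fun ω => (μ⟦A ∩ B | m⟧) ω / (μ⟦B | m⟧) ω

theorem stronglyMeasurable_condProbRatio (A B : Set Ω) :
    StronglyMeasurable[m] (condProbRatio μ m A B) :=
  (stronglyMeasurable_condExp.measurable.div
    stronglyMeasurable_condExp.measurable).stronglyMeasurable

theorem ae_abs_condProbRatio_le_one [IsFiniteMeasure μ] {A B : Set Ω} (hA : MeasurableSet A)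
    (hB : MeasurableSet B) : ∀ᵐ ω ∂μ, |condProbRatio μ m A B ω| ≤ 1 :=
  (ae_condExp_indicator_inter_mem_Icc hA hB).mono fun _ h => abs_le.2
    ⟨(neg_nonpos.2 zero_le_one).trans (div_nonneg h.1 (h.1.trans h.2)),
      div_le_one_of_le₀ h.2 (h.1.trans h.2)⟩

theorem condProbRatio_mul_condExp_indicator_ae_eq [IsFiniteMeasure μ] {A B : Set Ω}
    (hA : MeasurableSet A) (hB : MeasurableSet B) :
    (fun ω => condProbRatio μ m A B ω * (μ⟦B | m⟧) ω) =ᵐ[μ] μ⟦A ∩ B | m⟧ :=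
  (ae_condExp_indicator_inter_mem_Icc hA hB).mono fun _ h =>
    div_mul_cancel_of_imp fun h0 => le_antisymm (h0 ▸ h.2) h.1

theorem integrable_condProbRatio [IsFiniteMeasure μ] (hm : m ≤ m0) {A B : Set Ω}
    (hA : MeasurableSet A) (hB : MeasurableSet B) : Integrable (condProbRatio μ m A B) μ :=
  Integrable.of_bound ((stronglyMeasurable_condProbRatio A B).mono hm).aestronglyMeasurable 1
    ((ae_abs_condProbRatio_le_one hA hB).mono fun _ h => by rwa [Real.norm_eq_abs])

theorem setIntegral_inter_condProbRatio [IsFiniteMeasure μ] (hm : m ≤ m0) {A B D : Set Ω}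
    (hA : MeasurableSet A) (hD : MeasurableSet D) (hB : MeasurableSet[m] B) :
    ∫ ω in B ∩ D, condProbRatio μ m A D ω ∂μ
      = ∫ ω in B ∩ D, A.indicator (fun _ => (1 : ℝ)) ω ∂μ :=
  calc ∫ ω in B ∩ D, condProbRatio μ m A D ω ∂μ
      = ∫ ω in B, condProbRatio μ m A D ω * D.indicator (fun _ => (1 : ℝ)) ω ∂μ :=
        setIntegral_inter_eq_setIntegral_mul_indicator hD _
    _ = ∫ ω in B, condProbRatio μ m A D ω * (μ⟦D | m⟧) ω ∂μ :=
        (setIntegral_mul_condExp hm (stronglyMeasurable_condProbRatio A D)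
          ((integrable_condProbRatio hm hA hD).mul_indicator_one hD)
          ((integrable_const 1).indicator hD) hB).symm
    _ = ∫ ω in B, (μ⟦A ∩ D | m⟧) ω ∂μ :=
        setIntegral_congr_ae (hm B hB)
          ((condProbRatio_mul_condExp_indicator_ae_eq hA hD).mono fun _ h _ => h)
    _ = ∫ ω in B, A.indicator (fun _ => (1 : ℝ)) ω * D.indicator (fun _ => (1 : ℝ)) ω ∂μ :=
        (setIntegral_condExp hm ((integrable_const 1).indicator (hA.inter hD)) hB).trans
          (congrArg _ (funext fun ω => congrFun inter_indicator_one ω))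
    _ = ∫ ω in B ∩ D, A.indicator (fun _ => (1 : ℝ)) ω ∂μ :=
        (setIntegral_inter_eq_setIntegral_mul_indicator hD _).symm

theorem condExp_indicator_sup_comap_ae_eq [IsFiniteMeasure μ] [Fintype S] (hm : m ≤ m0)
    {Y : Ω → S} (hY : MeasurableSpace.comap Y ⊤ ≤ m0) {A : Set Ω} (hA : MeasurableSet A) :
    μ⟦A | m ⊔ MeasurableSpace.comap Y ⊤⟧
      =ᵐ[μ] fun ω => condProbRatio μ m A (Y ⁻¹' {Y ω}) ω := by
  have hYx' : ∀ x, MeasurableSet[MeasurableSpace.comap Y ⊤] (Y ⁻¹' {x}) :=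
    fun x => ⟨{x}, trivial, rfl⟩
  have hYx : ∀ x, MeasurableSet (Y ⁻¹' {x}) := fun x => hY _ (hYx' x)
  set q : S → Ω → ℝ := fun x => condProbRatio μ m A (Y ⁻¹' {x})
  have hqm : StronglyMeasurable[m ⊔ MeasurableSpace.comap Y ⊤] (fun ω => q (Y ω) ω) := by
    rw [apply_self_eq_sum_indicator_preimage]
    exact Finset.stronglyMeasurable_sum _ fun x _ =>
      ((stronglyMeasurable_condProbRatio _ _).mono le_sup_left).indicator
        (le_sup_right (a := m) _ (hYx' x))
  have hqi : Integrable (fun ω => q (Y ω) ω) μ := by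
    rw [apply_self_eq_sum_indicator_preimage]
    exact integrable_finsetSum' _ fun x _ =>
      (integrable_condProbRatio hm hA (hYx x)).indicator (hYx x)
  refine (ae_eq_condExp_of_forall_setIntegral_eq_of_isPiSystem (sup_le hm hY)
    (sup_eq_generateFrom_image2_inter _ _)
    (m.isPiSystem_measurableSet.image2_inter (MeasurableSpace.comap Y ⊤).isPiSystem_measurableSet)
    ⟨univ, .univ, univ, @MeasurableSet.univ _ (MeasurableSpace.comap Y ⊤), inter_univ _⟩
    ((integrable_const 1).indicator hA) hqi hqm ?_).symm
  rintro _ ⟨B, hB, _, ⟨v, -, rfl⟩, rfl⟩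
  classical
  rw [← v.coe_toFinset, setIntegral_inter_preimage_eq_sum hYx (hm B hB) _ hqi,
    setIntegral_inter_preimage_eq_sum hYx (hm B hB) _ ((integrable_const 1).indicator hA)]
  refine Finset.sum_congr rfl fun x _ => ?_
  rw [← setIntegral_inter_condProbRatio hm hA (hYx x) hB]
  exact setIntegral_congr_fun ((hm B hB).inter (hYx x)) fun ω hω => by rw [hω.2]

theorem condExp_indicator_inter_ae_eq_sum [IsFiniteMeasure μ] [Fintype S] (hm : m ≤ m')
    (hm' : m' ≤ m0) {Y : Ω → S} (hY : ∀ x, MeasurableSet (Y ⁻¹' {x})) {E A : Set Ω}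
    (hE : MeasurableSet[m'] E) (hA : MeasurableSet A) {q : S → Ω → ℝ}
    (hq : ∀ x, StronglyMeasurable[m] (q x)) (hq_bdd : ∀ x, ∀ᵐ ω ∂μ, |q x ω| ≤ 1)
    (hAq : μ⟦A | m'⟧ =ᵐ[μ] fun ω => q (Y ω) ω) :
    μ⟦E ∩ A | m⟧ =ᵐ[μ] ∑ x, fun ω => q x ω * (μ⟦E ∩ Y ⁻¹' {x} | m⟧) ω := by
  have hE0 : MeasurableSet E := hm' E hE
  have hqE : ∀ x, Integrable
      (fun ω => q x ω * (E ∩ Y ⁻¹' {x}).indicator (fun _ => (1 : ℝ)) ω) μ := fun x =>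
    (Integrable.of_bound ((hq x).mono (hm.trans hm')).aestronglyMeasurable 1
      ((hq_bdd x).mono fun _ h => by rwa [Real.norm_eq_abs])).mul_indicator_one
      (hE0.inter (hY x))
  have hsplit : μ⟦E ∩ A | m'⟧
      =ᵐ[μ] ∑ x, fun ω => q x ω * (E ∩ Y ⁻¹' {x}).indicator (fun _ => (1 : ℝ)) ω := by
    have hEA : (E ∩ A).indicator (fun _ => (1 : ℝ))
        = E.indicator (fun _ => (1 : ℝ)) * A.indicator (fun _ => (1 : ℝ)) := inter_indicator_one
    rw [hEA]
    refine (condExp_mul_of_stronglyMeasurable_left (stronglyMeasurable_const.indicator hE)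
      ?_ ((integrable_const 1).indicator hA)).trans (hAq.mono fun ω h => ?_)
    · rw [← hEA]
      exact (integrable_const 1).indicator (hE0.inter hA)
    · classical
      simp only [Pi.mul_apply, h, Finset.sum_apply]
      by_cases hω : ω ∈ E <;> simp [indicator_apply, hω]
  calc μ⟦E ∩ A | m⟧
      =ᵐ[μ] μ[μ⟦E ∩ A | m'⟧ | m] := (condExp_condExp_of_le hm hm').symm
    _ =ᵐ[μ] μ[∑ x, fun ω => q x ω * (E ∩ Y ⁻¹' {x}).indicator (fun _ => (1 : ℝ)) ω | m] :=
        condExp_congr_ae hsplit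
    _ =ᵐ[μ] ∑ x, μ[fun ω => q x ω * (E ∩ Y ⁻¹' {x}).indicator (fun _ => (1 : ℝ)) ω | m] :=
        condExp_finsetSum (fun x _ => hqE x) _
    _ =ᵐ[μ] ∑ x, fun ω => q x ω * (μ⟦E ∩ Y ⁻¹' {x} | m⟧) ω :=
        eventuallyEq_sum fun x _ => condExp_mul_of_stronglyMeasurable_left (hq x) (hqE x)
          ((integrable_const 1).indicator (hE0.inter (hY x)))

end MeasureTheory

section PathCylinder

variable {ι S : Type*}

def pathCylinder (X : ι → Ω → S) (τ : Finset ι) (u : ι → Set S) : Set Ω :=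
  ⋂ i ∈ τ, X i ⁻¹' u i

def pathCylinders (X : ι → Ω → S) (I : Set ι) : Set (Set Ω) :=
  {C | ∃ τ : Finset ι, ↑τ ⊆ I ∧ ∃ u, C = pathCylinder X τ u}

variable {X : ι → Ω → S}

@[simp]
theorem pathCylinder_empty (u : ι → Set S) : pathCylinder X ∅ u = univ := by
  simp [pathCylinder]

theorem pathCylinder_insert [DecidableEq ι] (i : ι) (τ : Finset ι) (u : ι → Set S) :
    pathCylinder X (insert i τ) u = pathCylinder X τ u ∩ X i ⁻¹' u i := by
  rw [pathCylinder, Finset.set_biInter_insert, inter_comm, pathCylinder]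

theorem pathCylinder_inter_preimage [DecidableEq ι] {i : ι} {τ : Finset ι} (hi : i ∈ τ)
    (u : ι → Set S) (v : Set S) :
    pathCylinder X τ u ∩ X i ⁻¹' v = pathCylinder X τ (Function.update u i (u i ∩ v)) := by
  ext ω
  simp only [pathCylinder, mem_inter_iff, mem_iInter, mem_preimage, Function.update_apply]
  grind

theorem measurableSet_pathCylinder {m : MeasurableSpace Ω} {τ : Finset ι}
    (hX : ∀ i ∈ τ, MeasurableSpace.comap (X i) ⊤ ≤ m) (u : ι → Set S) :
    MeasurableSet[m] (pathCylinder X τ u) :=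
  Finset.measurableSet_biInter τ fun i hi => hX i hi _ ⟨u i, trivial, rfl⟩

theorem univ_mem_pathCylinders (I : Set ι) : univ ∈ pathCylinders X I :=
  ⟨∅, by simp, fun _ => univ, by simp⟩

theorem isPiSystem_pathCylinders (I : Set ι) : IsPiSystem (pathCylinders X I) := by
  classical
  rintro _ ⟨τ, hτ, u, rfl⟩ _ ⟨τ', hτ', u', rfl⟩ -
  refine ⟨τ ∪ τ', by simpa using ⟨hτ, hτ'⟩,
    fun i => {x | (i ∈ τ → x ∈ u i) ∧ (i ∈ τ' → x ∈ u' i)}, ?_⟩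
  ext ω
  simp only [pathCylinder, mem_inter_iff, mem_iInter, mem_preimage, Finset.mem_union]
  grind

theorem generateFrom_pathCylinders (I : Set ι) :
    generateFrom (pathCylinders X I) = ⨆ i ∈ I, MeasurableSpace.comap (X i) ⊤ := by
  refine le_antisymm (generateFrom_le ?_) (iSup₂_le fun i hi => ?_)
  · rintro _ ⟨τ, hτ, u, rfl⟩
    exact measurableSet_pathCylinder (fun i hi => le_iSup₂ (f := fun i (_ : i ∈ I) =>
      MeasurableSpace.comap (X i) ⊤) i (hτ hi)) u
  · rintro _ ⟨v, -, rfl⟩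
    exact measurableSet_generateFrom
      ⟨{i}, by simpa using hi, fun _ => v, by simp [pathCylinder]⟩

end PathCylinder

theorem ind_eq_indicator {d : ℕ} (X : ℝ → Ω → Fin d) (t : ℝ) (y : Fin d) :
    ind X t y = (X t ⁻¹' {y}).indicator fun _ => 1 := by
  ext ω
  by_cases h : X t ω = y <;> simp [ind, h]

theorem prod_ind_eq_indicator_pathCylinder {d : ℕ} (X : ℝ → Ω → Fin d) (I : Finset ℕ)
    (t : ℕ → ℝ) (x : ℕ → Fin d) :
    (fun ω => ∏ k ∈ I, ind X (t k) (x k) ω) =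
      (pathCylinder X (I.image t) fun ρ => {y | ∀ k ∈ I, t k = ρ → y = x k}).indicator
        fun _ => 1 := by
  have hset : ⋂ k ∈ I, X (t k) ⁻¹' {x k} =
      pathCylinder X (I.image t) fun ρ => {y | ∀ k ∈ I, t k = ρ → y = x k} := by
    ext ω
    simp only [pathCylinder, mem_iInter, mem_preimage, mem_singleton_iff, Finset.mem_image,
      forall_exists_index, and_imp, forall_apply_eq_imp_iff₂]
    exact ⟨fun h i _ k hk hki => hki ▸ h k hk, fun h i hi => h i hi i hi rfl⟩
  ext ω
  simp only [ind_eq_indicator, prod_indicator_const_apply, hset]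
  congr 1
  ext
  simp

namespace IsDSMC

variable {m0 : MeasurableSpace Ω} {μ : Measure Ω} [IsFiniteMeasure μ]
  {ℱ 𝒢 : Filtration ℝ m0} {T : ℝ} {d : ℕ} {X : ℝ → Ω → Fin d}

theorem condExp_preimage_ae_eq (hX : IsDSMC μ ℱ 𝒢 T X) (hadp : ∀ t, Measurable[𝒢 t] (X t))
    {s t : ℝ} (h0s : 0 ≤ s) (hst : s ≤ t) (htT : t ≤ T) (u : Set (Fin d)) :
    μ⟦X t ⁻¹' u | ℱ T ⊔ 𝒢 s⟧ =ᵐ[μ] μ⟦X t ⁻¹' u | ℱ t ⊔ MeasurableSpace.comap (X s) ⊤⟧ := by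
  classical
  have hsum : (X t ⁻¹' u).indicator (fun _ => (1 : ℝ)) = ∑ y ∈ u.toFinset, ind X t y := by
    ext ω
    simp [ind, indicator_apply, Finset.sum_apply]
  have hint : ∀ y ∈ u.toFinset, Integrable (ind X t y) μ := fun y _ => by
    rw [ind_eq_indicator]
    exact (integrable_const 1).indicator ((hadp t).comap_le.trans (𝒢.le t) _ ⟨{y}, trivial, rfl⟩)
  rw [hsum]
  exact (condExp_finsetSum hint _).trans <|
    (eventuallyEq_sum fun y _ => hX s t h0s hst htT y).trans (condExp_finsetSum hint _).symm

theorem condExp_inter_preimage_ae_eq (hX : IsDSMC μ ℱ 𝒢 T X)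
    (hadp : ∀ t, Measurable[𝒢 t] (X t)) {r' r s : ℝ} (h0r' : 0 ≤ r') (hr'r : r' ≤ r)
    (hrs : r ≤ s) (hsT : s ≤ T) {E : Set Ω} (hE : MeasurableSet[𝒢 r'] E)
    (hEx : ∀ x, μ⟦E ∩ X r' ⁻¹' {x} | ℱ T⟧ =ᵐ[μ] μ⟦E ∩ X r' ⁻¹' {x} | ℱ s⟧) (u : Set (Fin d)) :
    μ⟦E ∩ X r ⁻¹' u | ℱ T⟧ =ᵐ[μ] μ⟦E ∩ X r ⁻¹' u | ℱ s⟧ := by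
  have hY : MeasurableSpace.comap (X r') ⊤ ≤ m0 := (hadp r').comap_le.trans (𝒢.le r')
  have hYx : ∀ x, MeasurableSet (X r' ⁻¹' {x}) := fun x => hY _ ⟨{x}, trivial, rfl⟩
  have hA : MeasurableSet (X r ⁻¹' u) := (hadp r).comap_le.trans (𝒢.le r) _ ⟨u, trivial, rfl⟩
  set q : Fin d → Ω → ℝ := fun x => condProbRatio μ (ℱ r) (X r ⁻¹' u) (X r' ⁻¹' {x})
  have hAq : μ⟦X r ⁻¹' u | ℱ T ⊔ 𝒢 r'⟧ =ᵐ[μ] fun ω => q (X r' ω) ω :=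
    (hX.condExp_preimage_ae_eq hadp h0r' hr'r (hrs.trans hsT) u).trans
      (condExp_indicator_sup_comap_ae_eq (ℱ.le r) hY hA)
  have hrep : ∀ m : MeasurableSpace Ω, ℱ r ≤ m → m ≤ ℱ T →
      μ⟦E ∩ X r ⁻¹' u | m⟧ =ᵐ[μ] ∑ x, fun ω => q x ω * (μ⟦E ∩ X r' ⁻¹' {x} | m⟧) ω :=
    fun m hrm hmT => condExp_indicator_inter_ae_eq_sum (hmT.trans le_sup_left)
      (sup_le (ℱ.le T) (𝒢.le r')) hYx (le_sup_right (a := (ℱ T : MeasurableSpace Ω)) _ hE) hA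
      (fun x => (stronglyMeasurable_condProbRatio _ _).mono hrm)
      (fun x => ae_abs_condProbRatio_le_one hA (hYx x)) hAq
  exact (hrep _ (ℱ.mono (hrs.trans hsT)) le_rfl).trans <|
    (eventuallyEq_sum fun x _ => (hEx x).mono fun ω h => congrArg (q x ω * ·) h).trans
      (hrep _ (ℱ.mono hrs) (ℱ.mono hsT)).symm

theorem condExp_pathCylinder_ae_eq (hX : IsDSMC μ ℱ 𝒢 T X)
    (hadp : ∀ t, Measurable[𝒢 t] (X t))
    (hinit : ∀ x, μ[ind X 0 x | ℱ T] =ᵐ[μ] μ[ind X 0 x | ℱ 0]) {s : ℝ} (hsT : s ≤ T)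
    (τ : Finset ℝ) (hτ : ↑τ ⊆ Icc 0 s) (u : ℝ → Set (Fin d)) :
    μ⟦pathCylinder X τ u | ℱ T⟧ =ᵐ[μ] μ⟦pathCylinder X τ u | ℱ s⟧ := by
  induction τ using Finset.induction_on_max generalizing u with
  | empty =>
    rw [pathCylinder_empty, indicator_univ, condExp_const (ℱ.le T), condExp_const (ℱ.le s)]
  | insert r τ' hlt ih =>
    have hr : r ∈ Icc 0 s := hτ (Finset.mem_insert_self r τ')
    have hτ' : ↑τ' ⊆ Icc 0 s := fun ρ hρ => hτ (Finset.mem_insert_of_mem hρ)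
    rw [pathCylinder_insert]
    rcases τ'.eq_empty_or_nonempty with rfl | hne
    · refine hX.condExp_inter_preimage_ae_eq hadp le_rfl hr.1 hr.2 hsT
        (by rw [pathCylinder_empty]; exact .univ) (fun x => ?_) (u r)
      rw [pathCylinder_empty, univ_inter, ← ind_eq_indicator]
      exact condExp_ae_eq_condExp_of_le_of_le (ℱ.mono (hr.1.trans hr.2)) (ℱ.mono hsT) (ℱ.le T)
        (hinit x)
    · have hmax := τ'.max'_mem hne
      refine hX.condExp_inter_preimage_ae_eq hadp (hτ' hmax).1 (hlt _ hmax).le hr.2 hsT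
        (measurableSet_pathCylinder (fun ρ hρ => (hadp ρ).comap_le.trans
          (𝒢.mono (τ'.le_max' ρ hρ))) u) (fun x => ?_) (u r)
      rw [pathCylinder_inter_preimage hmax]
      exact ih hτ' _

end IsDSMC

theorem dsmc_conditional_independence_and_immersion_general
    {m0 : MeasurableSpace Ω} (μ : Measure Ω) [IsProbabilityMeasure μ]
    (ℱ 𝒢 : Filtration ℝ m0) (T : ℝ) (d : ℕ) (X : ℝ → Ω → Fin d)
    (hadp : ∀ t : ℝ, Measurable[𝒢 t] (X t))
    (hX : IsDSMC μ ℱ 𝒢 T X)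
    (hinit : ∀ x : Fin d, μ[ind X 0 x | ℱ T] =ᵐ[μ] μ[ind X 0 x | ℱ 0]) :
    (∀ (n : ℕ) (t : ℕ → ℝ) (x : ℕ → Fin d) (s : ℝ),
      (∀ k, 1 ≤ k → k < n → t k ≤ t (k + 1)) → (∀ k, 1 ≤ k → k ≤ n → 0 ≤ t k) →
      t n ≤ s → s ≤ T →
      μ[(fun ω => ∏ k ∈ Finset.Icc 1 n, ind X (t k) (x k) ω) | ℱ T]
        =ᵐ[μ] μ[(fun ω => ∏ k ∈ Finset.Icc 1 n, ind X (t k) (x k) ω) | ℱ s]) ∧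
    (∀ ψ : Ω → ℝ, Measurable[ℱ T] ψ → (∃ C, ∀ ω, |ψ ω| ≤ C) →
      ∀ t ∈ Set.Icc (0:ℝ) T,
        μ[ψ | (ℱ t : MeasurableSpace Ω)
            ⊔ (⨆ s ∈ Set.Icc (0:ℝ) t, MeasurableSpace.comap (X s) ⊤)]
          =ᵐ[μ] μ[ψ | ℱ t]) := by
  refine ⟨fun n t x s hmono h0 hns hsT => ?_, fun ψ hψm ⟨C, hC⟩ t ht => ?_⟩
  · have ht_mono : MonotoneOn t (Icc 1 n) :=
      monotoneOn_of_le_add_one ordConnected_Icc fun k _ hk hk1 => hmono k hk.1 hk1.2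
    rw [prod_ind_eq_indicator_pathCylinder]
    refine hX.condExp_pathCylinder_ae_eq hadp hinit hsT _ (fun ρ hρ => ?_) _
    obtain ⟨k, hk, rfl⟩ := Finset.mem_image.1 hρ
    obtain ⟨hk1, hkn⟩ := Finset.mem_Icc.1 hk
    exact ⟨h0 k hk1 hkn, (ht_mono ⟨hk1, hkn⟩ ⟨hk1.trans hkn, le_rfl⟩ hkn).trans hns⟩
  · have hψ : Integrable ψ μ := Integrable.of_bound
      (hψm.stronglyMeasurable.mono (ℱ.le T)).aestronglyMeasurable C
      (ae_of_all _ fun ω => by rw [Real.norm_eq_abs]; exact hC ω)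
    rw [← generateFrom_pathCylinders]
    exact condExp_sup_generateFrom_ae_eq_of_condExp_indicator_ae_eq (ℱ.mono ht.2) (ℱ.le T)
      (isPiSystem_pathCylinders _) (univ_mem_pathCylinders _)
      (fun _ ⟨_, _, u, hC⟩ => hC ▸ measurableSet_pathCylinder
        (fun i _ => (hadp i).comap_le.trans (𝒢.le i)) u)
      (fun _ ⟨τ, hτ, u, hC⟩ => hC ▸ hX.condExp_pathCylinder_ae_eq hadp hinit ht.2 τ hτ u)
      hψm.stronglyMeasurable hψ

/-- If `X` is an `(𝔽,𝔾)`-DSMC whose initial state satisfies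
`ℙ(X_0 = x | ℱ_T) = ℙ(X_0 = x | ℱ_0)` for all `x`, then for all
`0 ≤ t_1 ≤ … ≤ t_n ≤ t ≤ T`,
`ℙ(X_{t_1} = x_1, …, X_{t_n} = x_n | ℱ_T) = ℙ(X_{t_1} = x_1, …, X_{t_n} = x_n | ℱ_t)` a.s.,
and consequently `𝔽` is `ℙ`-immersed in `𝔽 ∨ 𝔽^X` (here expressed by the standard
characterization: conditional expectations of bounded `ℱ_T`-measurable variables given
`ℱ_t ∨ ℱ^X_t` coincide with those given `ℱ_t`). -/
theorem dsmc_conditional_independence_and_immersion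
    {m0 : MeasurableSpace Ω} (μ : Measure Ω) [IsProbabilityMeasure μ]
    (ℱ 𝒢 : Filtration ℝ m0) (T : ℝ) (hT : 0 < T) (d : ℕ) (X : ℝ → Ω → Fin d)
    (hadp : ∀ t : ℝ, Measurable[𝒢 t] (X t))
    (hX : IsDSMC μ ℱ 𝒢 T X)
    (hinit : ∀ x : Fin d, μ[ind X 0 x | ℱ T] =ᵐ[μ] μ[ind X 0 x | ℱ 0]) :
    (∀ (n : ℕ) (t : ℕ → ℝ) (x : ℕ → Fin d) (s : ℝ),
      (∀ k, 1 ≤ k → k < n → t k ≤ t (k + 1)) → (∀ k, 1 ≤ k → k ≤ n → 0 ≤ t k) →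
      t n ≤ s → s ≤ T →
      μ[(fun ω => ∏ k ∈ Finset.Icc 1 n, ind X (t k) (x k) ω) | ℱ T]
        =ᵐ[μ] μ[(fun ω => ∏ k ∈ Finset.Icc 1 n, ind X (t k) (x k) ω) | ℱ s]) ∧
    (∀ ψ : Ω → ℝ, Measurable[ℱ T] ψ → (∃ C, ∀ ω, |ψ ω| ≤ C) →
      ∀ t ∈ Set.Icc (0:ℝ) T,
        μ[ψ | (ℱ t : MeasurableSpace Ω)
            ⊔ (⨆ s ∈ Set.Icc (0:ℝ) t, MeasurableSpace.comap (X s) ⊤)]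
          =ᵐ[μ] μ[ψ | ℱ t]) :=
  dsmc_conditional_independence_and_immersion_general μ ℱ 𝒢 T d X hadp hX hinit
end
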